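/- Let I and J be proper ideals of 𝕂̃, with J a z-ideal. If J is contained in the radical of I, then J ⊆ I. -/

import Mathlib

noncomputable section

set_option maxHeartbeats 1000000
set_option synthInstance.maxHeartbeats 400000

open scoped Classical

/-- The index set `(0,1) ⊆ ℝ` of the nets. -/
abbrev Eps : Type := Set.Ioo (0:ℝ) 1

variable (K : Type) [RCLike K]

/-- A net `(x_ε)_{ε ∈ (0,1)}` is moderate if `|x_ε| ≤ ε^a` for some `a ∈ ℝ`,
for all sufficiently small `ε`. -/
def IsModerate (x : Eps → K) : Prop :=
  ∃ a : ℝ, ∃ ε₀ ∈ Set.Ioo (0:ℝ) 1, ∀ ε : Eps, (ε : ℝ) ≤ ε₀ → ‖x ε‖ ≤ (ε : ℝ) ^ a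

/-- A net `(x_ε)_{ε ∈ (0,1)}` is negligible if for every `a ∈ ℝ`, `|x_ε| ≤ ε^a`
for all sufficiently small `ε`. -/
def IsNegligible (x : Eps → K) : Prop :=
  ∀ a : ℝ, ∃ ε₀ ∈ Set.Ioo (0:ℝ) 1, ∀ ε : Eps, (ε : ℝ) ≤ ε₀ → ‖x ε‖ ≤ (ε : ℝ) ^ a

theorem rpow_two_bound {ε : ℝ} (h0 : 0 < ε) (h2 : ε ≤ 1/2) (a b : ℝ) :
    ε ^ a + ε ^ b ≤ ε ^ (min a b - 1) := by
  have h1 : ε ≤ 1 := h2.trans (by norm_num)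
  have ha : ε ^ a ≤ ε ^ min a b :=
    Real.rpow_le_rpow_of_exponent_ge h0 h1 (min_le_left a b)
  have hb : ε ^ b ≤ ε ^ min a b :=
    Real.rpow_le_rpow_of_exponent_ge h0 h1 (min_le_right a b)
  have key : 2 * ε ^ min a b ≤ ε ^ (min a b - 1) := by
    rw [Real.rpow_sub h0, Real.rpow_one, le_div_iff₀ h0]
    have hx : (0:ℝ) ≤ ε ^ min a b := (Real.rpow_pos_of_pos h0 _).le
    calc 2 * ε ^ min a b * ε ≤ 2 * ε ^ min a b * (1/2) := by
          apply mul_le_mul_of_nonneg_left h2 (by positivity)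
      _ = ε ^ min a b := by ring
  calc ε ^ a + ε ^ b ≤ 2 * ε ^ min a b := by linarith
    _ ≤ ε ^ (min a b - 1) := key

/-- The ring of moderate nets, as a subring of `K^{(0,1)}`. -/
def Moderate : Subring (Eps → K) where
  carrier := {x | IsModerate K x}
  zero_mem' := by
    refine ⟨0, 1/2, by constructor <;> norm_num, fun ε _ => ?_⟩
    simp [Real.rpow_zero]
  one_mem' := by
    refine ⟨0, 1/2, by constructor <;> norm_num, fun ε _ => ?_⟩
    simp [Real.rpow_zero]
  add_mem' := by
    rintro x y ⟨a, ε₀, h₀, ha⟩ ⟨b, ε₁, h₁, hb⟩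
    refine ⟨min a b - 1, min (min ε₀ ε₁) (1/2), ⟨lt_min (lt_min h₀.1 h₁.1) (by norm_num), ?_⟩,
      fun ε hε => ?_⟩
    · calc min (min ε₀ ε₁) (1/2) ≤ 1/2 := min_le_right _ _
        _ < 1 := by norm_num
    · have hε₀ : (ε:ℝ) ≤ ε₀ := le_trans hε (le_trans (min_le_left _ _) (min_le_left _ _))
      have hε₁ : (ε:ℝ) ≤ ε₁ := le_trans hε (le_trans (min_le_left _ _) (min_le_right _ _))
      have hε2 : (ε:ℝ) ≤ 1/2 := le_trans hε (min_le_right _ _)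
      calc ‖(x + y) ε‖ ≤ ‖x ε‖ + ‖y ε‖ := norm_add_le _ _
        _ ≤ (ε:ℝ) ^ a + (ε:ℝ) ^ b := add_le_add (ha ε hε₀) (hb ε hε₁)
        _ ≤ (ε:ℝ) ^ (min a b - 1) := rpow_two_bound ε.2.1 hε2 a b
  neg_mem' := by
    rintro x ⟨a, ε₀, h₀, ha⟩
    exact ⟨a, ε₀, h₀, fun ε hε => by simpa using ha ε hε⟩
  mul_mem' := by
    rintro x y ⟨a, ε₀, h₀, ha⟩ ⟨b, ε₁, h₁, hb⟩
    refine ⟨a + b, min ε₀ ε₁, ⟨lt_min h₀.1 h₁.1, lt_of_le_of_lt (min_le_left _ _) h₀.2⟩,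
      fun ε hε => ?_⟩
    have hε₀ : (ε:ℝ) ≤ ε₀ := le_trans hε (min_le_left _ _)
    have hε₁ : (ε:ℝ) ≤ ε₁ := le_trans hε (min_le_right _ _)
    calc ‖(x * y) ε‖ = ‖x ε‖ * ‖y ε‖ := norm_mul _ _
      _ ≤ (ε:ℝ) ^ a * (ε:ℝ) ^ b :=
        mul_le_mul (ha ε hε₀) (hb ε hε₁) (norm_nonneg _) (Real.rpow_pos_of_pos ε.2.1 _).le
      _ = (ε:ℝ) ^ (a + b) := (Real.rpow_add ε.2.1 _ _).symm

theorem mem_moderate {f : Eps → K} (h : IsModerate K f) : f ∈ Moderate K := h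

/-- The ideal of negligible nets in the ring of moderate nets. -/
def Negligible : Ideal (Moderate K) where
  carrier := {x | IsNegligible K (x : Eps → K)}
  zero_mem' := by
    intro a
    refine ⟨1/2, by constructor <;> norm_num, fun ε _ => ?_⟩
    have : (0:ℝ) ≤ (ε:ℝ) ^ a := (Real.rpow_pos_of_pos ε.2.1 _).le
    simpa using this
  add_mem' := by
    intro x y hx hy a
    obtain ⟨ε₀, h₀, ha⟩ := hx (a + 1)
    obtain ⟨ε₁, h₁, hb⟩ := hy (a + 1)
    refine ⟨min (min ε₀ ε₁) (1/2), ⟨lt_min (lt_min h₀.1 h₁.1) (by norm_num), ?_⟩, fun ε hε => ?_⟩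
    · calc min (min ε₀ ε₁) (1/2) ≤ 1/2 := min_le_right _ _
        _ < 1 := by norm_num
    · have hε₀ : (ε:ℝ) ≤ ε₀ := le_trans hε (le_trans (min_le_left _ _) (min_le_left _ _))
      have hε₁ : (ε:ℝ) ≤ ε₁ := le_trans hε (le_trans (min_le_left _ _) (min_le_right _ _))
      have hε2 : (ε:ℝ) ≤ 1/2 := le_trans hε (min_le_right _ _)
      have hbd := rpow_two_bound (ε := (ε:ℝ)) ε.2.1 hε2 (a+1) (a+1)
      simp only [min_self, add_sub_cancel_right] at hbd
      calc ‖((x + y : Moderate K) : Eps → K) ε‖ ≤ ‖(x : Eps → K) ε‖ + ‖(y : Eps → K) ε‖ := by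
            push_cast
            exact norm_add_le _ _
        _ ≤ (ε:ℝ) ^ (a+1) + (ε:ℝ) ^ (a+1) := add_le_add (ha ε hε₀) (hb ε hε₁)
        _ ≤ (ε:ℝ) ^ a := hbd
  smul_mem' := by
    intro c x hx
    show IsNegligible K ((c * x : Moderate K) : Eps → K)
    intro a
    obtain ⟨b, ε₀, h₀, hc⟩ := c.property
    obtain ⟨ε₁, h₁, hxa⟩ := hx (a - b)
    refine ⟨min ε₀ ε₁, ⟨lt_min h₀.1 h₁.1, lt_of_le_of_lt (min_le_left _ _) h₀.2⟩,
      fun ε hε => ?_⟩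
    have hε₀ : (ε:ℝ) ≤ ε₀ := le_trans hε (min_le_left _ _)
    have hε₁ : (ε:ℝ) ≤ ε₁ := le_trans hε (min_le_right _ _)
    calc ‖((c * x : Moderate K) : Eps → K) ε‖ = ‖(c : Eps → K) ε‖ * ‖(x : Eps → K) ε‖ := by
          push_cast
          exact norm_mul _ _
      _ ≤ (ε:ℝ) ^ b * (ε:ℝ) ^ (a - b) :=
        mul_le_mul (hc ε hε₀) (hxa ε hε₁) (norm_nonneg _) (Real.rpow_pos_of_pos ε.2.1 _).le
      _ = (ε:ℝ) ^ a := by rw [← Real.rpow_add ε.2.1]; ring_nf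

/-- The ring of Colombeau generalized numbers: the quotient of the ring of
moderate nets by the ideal of negligible nets. -/
abbrev CGen : Type := Moderate K ⧸ Negligible K

/-- The quotient map. -/
abbrev cmk : Moderate K →+* CGen K := Ideal.Quotient.mk (Negligible K)

/-- A canonical representative of a Colombeau generalized number. -/
def rep (x : CGen K) : Moderate K := (Ideal.Quotient.mk_surjective x).choose

theorem rep_spec (x : CGen K) : cmk K (rep K x) = x :=
  (Ideal.Quotient.mk_surjective x).choose_spec

theorem indicator_moderate (S : Set Eps) :
    IsModerate K (fun ε => if ε ∈ S then (1:K) else 0) := by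
  refine ⟨0, 1/2, by constructor <;> norm_num, fun ε _ => ?_⟩
  rw [Real.rpow_zero]
  by_cases h : ε ∈ S <;> simp [h]

/-- `e_S`: the generalized number given by the characteristic function of `S ⊆ (0,1)`. -/
def eS (S : Set Eps) : CGen K :=
  cmk K ⟨fun ε => if ε ∈ S then (1:K) else 0, mem_moderate K (indicator_moderate K S)⟩

theorem absNet_moderate (f : Moderate K) :
    IsModerate K (fun ε => ((‖(f : Eps → K) ε‖ : ℝ) : K)) := by
  obtain ⟨a, ε₀, h₀, h⟩ := f.property
  refine ⟨a, ε₀, h₀, fun ε hε => ?_⟩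
  simpa [RCLike.norm_ofReal, abs_norm] using h ε hε

/-- `|x|`: the class of the net `(|x_ε|)_ε` (for any representative of `x`). -/
def absC (x : CGen K) : CGen K :=
  cmk K ⟨_, mem_moderate K (absNet_moderate K (rep K x))⟩

theorem minNet_moderate (f g : Moderate K) :
    IsModerate K (fun ε => ((min ‖(f : Eps → K) ε‖ ‖(g : Eps → K) ε‖ : ℝ) : K)) := by
  obtain ⟨a, ε₀, h₀, h⟩ := f.property
  refine ⟨a, ε₀, h₀, fun ε hε => ?_⟩
  rw [RCLike.norm_ofReal, abs_of_nonneg (le_min (norm_nonneg _) (norm_nonneg _))]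
  exact le_trans (min_le_left _ _) (h ε hε)

/-- `|x| ∧ |y|`: the class of the pointwise minimum of `(|x_ε|)_ε` and `(|y_ε|)_ε`. -/
def infAbs (x y : CGen K) : CGen K :=
  cmk K ⟨_, mem_moderate K (minNet_moderate K (rep K x) (rep K y))⟩

theorem sqrtNet_moderate (f : Moderate K) :
    IsModerate K (fun ε => ((Real.sqrt ‖(f : Eps → K) ε‖ : ℝ) : K)) := by
  obtain ⟨a, ε₀, h₀, h⟩ := f.property
  refine ⟨a / 2, ε₀, h₀, fun ε hε => ?_⟩
  rw [RCLike.norm_ofReal, abs_of_nonneg (Real.sqrt_nonneg _)]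
  calc Real.sqrt ‖(f : Eps → K) ε‖ ≤ Real.sqrt ((ε:ℝ) ^ a) := Real.sqrt_le_sqrt (h ε hε)
    _ = (ε:ℝ) ^ (a / 2) := by
        rw [Real.sqrt_eq_rpow, ← Real.rpow_mul ε.2.1.le]
        ring_nf

/-- `√|x|`: the class of the net `(√|x_ε|)_ε` (for any representative of `x`). -/
def sqrtAbs (x : CGen K) : CGen K :=
  cmk K ⟨_, mem_moderate K (sqrtNet_moderate K (rep K x))⟩

/-- The annihilator `Ann(a) = {x : x·a = 0}` as an ideal. -/
def annIdeal (a : CGen K) : Ideal (CGen K) where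
  carrier := {x | x * a = 0}
  zero_mem' := by simp
  add_mem' := by
    intro x y hx hy
    show (x + y) * a = 0
    rw [add_mul, hx, hy, add_zero]
  smul_mem' := by
    intro c x hx
    show c * x * a = 0
    rw [mul_assoc, hx, mul_zero]

/-- The order relation on `𝕂̃`: `x ≤ y` iff there exist (real-valued) representatives
`(u_ε)_ε` of `x` and `(v_ε)_ε` of `y` with `u_ε ≤ v_ε` for all `ε`. -/
def leC (x y : CGen K) : Prop :=
  ∃ u v : Moderate K, cmk K u = x ∧ cmk K v = y ∧
    ∀ ε : Eps, ∃ r s : ℝ, (u : Eps → K) ε = (r : K) ∧ (v : Eps → K) ε = (s : K) ∧ r ≤ s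

/-- A z-ideal: if `b ∈ I` and `a` belongs to exactly the same maximal ideals as `b`,
then `a ∈ I`. -/
def IsZIdeal (I : Ideal (CGen K)) : Prop :=
  ∀ a b : CGen K, b ∈ I →
    (∀ M : Ideal (CGen K), M.IsMaximal → (a ∈ M ↔ b ∈ M)) → a ∈ I


/-! Write `min |β_ε| 1 = ε ^ s_ε` and `d_ε = ε ^ (2 √s_ε)`. Since `2 √s ≤ s + 1` and
`s = (2 √s) ^ 2 / 4`, the net `d` is bounded below by a power of `ε` on the same sets as `β`,
which forces `d` and `β` into the same maximal ideals of `𝕂̃`. Since `s - 2 m √s ≥ -m²`, we have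
`|β_ε| ≤ d_ε ^ m ε ^ (-m²)` where `|β_ε| ≤ 1`, so every power of `d` divides `β`. Hence if
`β ∈ J`, then `d ∈ J` as `J` is a z-ideal, `d ^ n ∈ I` for some `n`, and `β ∈ I`. -/

def sqrtScale (x ε : ℝ) : ℝ :=
  -- `Real.logb ε 0 = 0`, so `x = 0` needs its own case
  if x = 0 then 0 else ε ^ (2 * √(Real.logb ε (min x 1)))

section sqrtScale

variable {x ε : ℝ}

lemma rpow_logb_min_one (hε : ε ∈ Set.Ioo (0:ℝ) 1) (hx : 0 < x) :
    ε ^ Real.logb ε (min x 1) = min x 1 :=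
  Real.rpow_logb hε.1 hε.2.ne (lt_min hx one_pos)

lemma logb_min_one_nonneg (hε : ε ∈ Set.Ioo (0:ℝ) 1) (hx : 0 < x) :
    0 ≤ Real.logb ε (min x 1) :=
  Real.logb_nonneg_of_base_lt_one hε.1 hε.2 (lt_min hx one_pos) (min_le_right _ _)

lemma sqrtScale_nonneg (hε : ε ∈ Set.Ioo (0:ℝ) 1) : 0 ≤ sqrtScale x ε := by
  unfold sqrtScale
  split_ifs
  exacts [le_rfl, (Real.rpow_pos_of_pos hε.1 _).le]

lemma sqrtScale_le_one (hε : ε ∈ Set.Ioo (0:ℝ) 1) : sqrtScale x ε ≤ 1 := by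
  unfold sqrtScale
  split_ifs
  exacts [zero_le_one, Real.rpow_le_one hε.1.le hε.2.le (by positivity)]

lemma sqrtScale_eq_zero_iff (hε : ε ∈ Set.Ioo (0:ℝ) 1) : sqrtScale x ε = 0 ↔ x = 0 := by
  unfold sqrtScale
  split_ifs with hx
  · simp [hx]
  · simp [hx, (Real.rpow_pos_of_pos hε.1 _).ne']

lemma rpow_add_one_le_sqrtScale (hε : ε ∈ Set.Ioo (0:ℝ) 1) {P : ℝ} (hP : 0 ≤ P)
    (h : ε ^ P ≤ x) :
    ε ^ (P + 1) ≤ sqrtScale x ε := by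
  have hx : 0 < x := (Real.rpow_pos_of_pos hε.1 P).trans_le h
  set s := Real.logb ε (min x 1)
  have hs : 0 ≤ s := logb_min_one_nonneg hε hx
  have hsP : s ≤ P := by
    rw [← Real.rpow_le_rpow_left_iff_of_base_lt_one hε.1 hε.2, rpow_logb_min_one hε hx]
    exact le_min h (Real.rpow_le_one hε.1.le hε.2.le hP)
  rw [sqrtScale, if_neg hx.ne', Real.rpow_le_rpow_left_iff_of_base_lt_one hε.1 hε.2]
  nlinarith [sq_nonneg (√s - 1), Real.sq_sqrt hs]

lemma rpow_sq_div_four_le_of_rpow_le_sqrtScale (hε : ε ∈ Set.Ioo (0:ℝ) 1) {P : ℝ}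
    (hx : 0 ≤ x) (h : ε ^ P ≤ sqrtScale x ε) : ε ^ (P ^ 2 / 4) ≤ x := by
  have hx : 0 < x := by
    refine hx.lt_of_ne' fun hx0 => ?_
    rw [(sqrtScale_eq_zero_iff hε).2 hx0] at h
    exact (Real.rpow_pos_of_pos hε.1 P).not_ge h
  set s := Real.logb ε (min x 1)
  have hs : 0 ≤ s := logb_min_one_nonneg hε hx
  rw [sqrtScale, if_neg hx.ne', Real.rpow_le_rpow_left_iff_of_base_lt_one hε.1 hε.2] at h
  have hsP : s ≤ P ^ 2 / 4 := by nlinarith [Real.sq_sqrt hs, Real.sqrt_nonneg s]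
  calc ε ^ (P ^ 2 / 4) ≤ ε ^ s := Real.rpow_le_rpow_of_exponent_ge hε.1 hε.2.le hsP
    _ = min x 1 := rpow_logb_min_one hε hx
    _ ≤ x := min_le_left _ _

lemma div_sqrtScale_pow_le (hε : ε ∈ Set.Ioo (0:ℝ) 1) (hx : 0 ≤ x) (m : ℕ) :
    x / sqrtScale x ε ^ m ≤ max (ε ^ (-(m:ℝ) ^ 2)) x := by
  rcases hx.eq_or_lt with rfl | hx
  · simp
  rcases le_or_gt x 1 with hx1 | hx1
  · set s := Real.logb ε (min x 1)
    have hs : 0 ≤ s := logb_min_one_nonneg hε hx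
    have hxs : x = ε ^ s := by rw [rpow_logb_min_one hε hx, min_eq_left hx1]
    have hd : sqrtScale x ε = ε ^ (2 * √s) := if_neg hx.ne'
    clear_value s
    refine le_max_of_le_left ?_
    rw [hd, hxs, ← Real.rpow_mul_natCast hε.1.le, div_eq_mul_inv,
      ← Real.rpow_neg hε.1.le, ← Real.rpow_add hε.1,
      Real.rpow_le_rpow_left_iff_of_base_lt_one hε.1 hε.2]
    nlinarith [sq_nonneg (√s - m), Real.sq_sqrt hs]
  · refine le_max_of_le_right (le_of_eq ?_)
    simp [sqrtScale, hx.ne', min_eq_right hx1.le]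

end sqrtScale

variable {K}

lemma isModerate_of_norm_le_one {x : Eps → K} (h : ∀ ε, ‖x ε‖ ≤ 1) : IsModerate K x :=
  ⟨0, 1/2, by norm_num, fun ε _ => by simpa using h ε⟩

lemma cmk_eq_of_eventually_eq {f g : Moderate K} {ε₀ : ℝ} (hε₀ : ε₀ ∈ Set.Ioo (0:ℝ) 1)
    (hfg : ∀ ε : Eps, (ε : ℝ) ≤ ε₀ → (f : Eps → K) ε = (g : Eps → K) ε) :
    cmk K f = cmk K g := by
  rw [Ideal.Quotient.mk_eq_mk_iff_sub_mem]
  refine fun a => ⟨ε₀, hε₀, fun ε hε => ?_⟩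
  simp [hfg ε hε, (Real.rpow_pos_of_pos ε.2.1 a).le]

lemma eS_add_eS_compl (S : Set Eps) : eS K S + eS K Sᶜ = 1 := by
  rw [eS, eS, ← map_add, ← map_one (cmk K)]
  congr 1
  ext ε
  by_cases h : ε ∈ S <;> simp [h]

lemma eS_mem_of_rpow_le_norm {M : Ideal (CGen K)} {η : Moderate K} (hη : cmk K η ∈ M)
    {S : Set Eps} {N ε₀ : ℝ} (hε₀ : ε₀ ∈ Set.Ioo (0:ℝ) 1)
    (hS : ∀ ε ∈ S, (ε : ℝ) ≤ ε₀ → (ε : ℝ) ^ N ≤ ‖(η : Eps → K) ε‖) : eS K S ∈ M := by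
  have hη0 : ∀ ε ∈ S, (ε : ℝ) ≤ ε₀ → (η : Eps → K) ε ≠ 0 := fun ε hεS hε h0 => by
    simpa [h0] using (Real.rpow_pos_of_pos ε.2.1 N).trans_le (hS ε hεS hε)
  let r : Eps → K := fun ε => if ε ∈ S then ((η : Eps → K) ε)⁻¹ else 0
  have hr : IsModerate K r := by
    refine ⟨-N, ε₀, hε₀, fun ε hε => ?_⟩
    by_cases hεS : ε ∈ S
    · simp only [r, if_pos hεS, norm_inv, Real.rpow_neg ε.2.1.le]
      exact inv_anti₀ (Real.rpow_pos_of_pos ε.2.1 N) (hS ε hεS hε)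
    · simp [r, hεS, (Real.rpow_pos_of_pos ε.2.1 _).le]
  have hrη : eS K S = cmk K ⟨r, hr⟩ * cmk K η := by
    rw [eS, ← map_mul]
    refine cmk_eq_of_eventually_eq hε₀ fun ε hε => ?_
    by_cases hεS : ε ∈ S
    · simp [r, hεS, inv_mul_cancel₀ (hη0 ε hεS hε)]
    · simp [r, hεS]
  rw [hrη]
  exact M.mul_mem_left _ hη

lemma exists_eS_compl_mem {M : Ideal (CGen K)} {ξ τ : Moderate K}
    (h : cmk K (1 - τ * ξ) ∈ M) :
    ∃ N ≥ (0:ℝ), eS K {ε : Eps | (ε : ℝ) ^ N ≤ ‖(ξ : Eps → K) ε‖}ᶜ ∈ M := by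
  obtain ⟨a, ε₁, hε₁, hτ⟩ := τ.2
  set N := max (1 - a) 0
  refine ⟨N, le_max_right _ _,
    eS_mem_of_rpow_le_norm h (N := 1) (ε₀ := min ε₁ (1/2)) ⟨lt_min hε₁.1 (by norm_num),
      (min_le_right _ _).trans_lt (by norm_num)⟩ fun ε hεS hε => ?_⟩
  have hξ : ‖(ξ : Eps → K) ε‖ ≤ (ε : ℝ) ^ N := (not_le.1 (Set.notMem_ofPred_iff.1 hεS)).le
  have hsmall : ‖(τ : Eps → K) ε * (ξ : Eps → K) ε‖ ≤ ε :=
    calc ‖(τ : Eps → K) ε * (ξ : Eps → K) ε‖ ≤ (ε : ℝ) ^ a * (ε : ℝ) ^ N := by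
          rw [norm_mul]
          exact mul_le_mul (hτ ε (hε.trans (min_le_left _ _))) hξ (norm_nonneg _)
            (Real.rpow_pos_of_pos ε.2.1 _).le
      _ = (ε : ℝ) ^ (a + N) := (Real.rpow_add ε.2.1 _ _).symm
      _ ≤ (ε : ℝ) ^ (1 : ℝ) :=
          Real.rpow_le_rpow_of_exponent_ge ε.2.1 ε.2.2.le (by linarith [le_max_left (1 - a) 0])
      _ = ε := Real.rpow_one _
  have hε2 : (ε : ℝ) ≤ 1 / 2 := hε.trans (min_le_right _ _)
  calc (ε : ℝ) ^ (1 : ℝ) = ε := Real.rpow_one _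
    _ ≤ ‖(1 : K)‖ - ‖(τ : Eps → K) ε * (ξ : Eps → K) ε‖ := by rw [norm_one]; linarith
    _ ≤ ‖(1 : K) - (τ : Eps → K) ε * (ξ : Eps → K) ε‖ := norm_sub_norm_le _ _
    _ = ‖((1 - τ * ξ : Moderate K) : Eps → K) ε‖ := by simp

/-- If `ξ ∉ M`, then `1 - τ ξ ∈ M` for some `τ`, so `M` contains the idempotent of the set where
`ξ` is small; `η ∈ M` puts the idempotent of the complement into `M` as well. -/
theorem cmk_mem_of_isMaximal_of_rpow_le_norm_imp {M : Ideal (CGen K)} (hM : M.IsMaximal)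
    {ξ η : Moderate K} (hξη : ∀ N ≥ (0:ℝ), ∃ N' : ℝ, ∀ ε : Eps,
      (ε : ℝ) ^ N ≤ ‖(ξ : Eps → K) ε‖ → (ε : ℝ) ^ N' ≤ ‖(η : Eps → K) ε‖)
    (hη : cmk K η ∈ M) : cmk K ξ ∈ M := by
  by_contra hξ
  obtain ⟨t, i, hi, hti⟩ := hM.exists_inv hξ
  obtain ⟨τ, rfl⟩ := Ideal.Quotient.mk_surjective t
  have h1 : cmk K (1 - τ * ξ) ∈ M := by
    rwa [map_sub, map_one, map_mul, ← hti, add_sub_cancel_left]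
  obtain ⟨N, hN, hSc⟩ := exists_eS_compl_mem h1
  obtain ⟨N', hN'⟩ := hξη N hN
  have hS := eS_mem_of_rpow_le_norm hη (ε₀ := 1/2) (by norm_num) fun ε hεS _ => hN' ε hεS
  refine hM.ne_top (M.eq_top_iff_one.2 ?_)
  rw [← eS_add_eS_compl]
  exact M.add_mem hS hSc

def sqrtScaleNet (β : Moderate K) : Moderate K :=
  ⟨fun ε => (sqrtScale ‖(β : Eps → K) ε‖ ε : K), isModerate_of_norm_le_one fun ε => by
    rw [RCLike.norm_ofReal, abs_of_nonneg (sqrtScale_nonneg ε.2)]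
    exact sqrtScale_le_one ε.2⟩

lemma norm_sqrtScaleNet (β : Moderate K) (ε : Eps) :
    ‖(sqrtScaleNet β : Eps → K) ε‖ = sqrtScale ‖(β : Eps → K) ε‖ ε :=
  (RCLike.norm_ofReal _).trans (abs_of_nonneg (sqrtScale_nonneg ε.2))

theorem cmk_sqrtScaleNet_mem_iff {M : Ideal (CGen K)} (hM : M.IsMaximal) (β : Moderate K) :
    cmk K (sqrtScaleNet β) ∈ M ↔ cmk K β ∈ M := by
  constructor
  · refine cmk_mem_of_isMaximal_of_rpow_le_norm_imp hM fun N hN => ⟨N + 1, fun ε h => ?_⟩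
    rw [norm_sqrtScaleNet]
    exact rpow_add_one_le_sqrtScale ε.2 hN h
  · refine cmk_mem_of_isMaximal_of_rpow_le_norm_imp hM fun N _ => ⟨N ^ 2 / 4, fun ε h => ?_⟩
    rw [norm_sqrtScaleNet] at h
    exact rpow_sq_div_four_le_of_rpow_le_sqrtScale ε.2 (norm_nonneg _) h

theorem cmk_sqrtScaleNet_pow_dvd (β : Moderate K) (m : ℕ) :
    cmk K (sqrtScaleNet β) ^ m ∣ cmk K β := by
  set d : Eps → K := (sqrtScaleNet β : Eps → K)
  obtain ⟨a, ε₀, hε₀, hβ⟩ := β.2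
  have hq : IsModerate K fun ε => (β : Eps → K) ε / d ε ^ m := by
    refine ⟨min (-(m:ℝ) ^ 2) a, ε₀, hε₀, fun ε hε => ?_⟩
    have hmin := fun c (hc : min (-(m:ℝ) ^ 2) a ≤ c) =>
      Real.rpow_le_rpow_of_exponent_ge ε.2.1 ε.2.2.le hc
    calc ‖(β : Eps → K) ε / d ε ^ m‖
        = ‖(β : Eps → K) ε‖ / sqrtScale ‖(β : Eps → K) ε‖ ε ^ m := by
          rw [norm_div, norm_pow, norm_sqrtScaleNet]
      _ ≤ max ((ε : ℝ) ^ (-(m:ℝ) ^ 2)) ‖(β : Eps → K) ε‖ :=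
          div_sqrtScale_pow_le ε.2 (norm_nonneg _) m
      _ ≤ (ε : ℝ) ^ min (-(m:ℝ) ^ 2) a :=
          max_le (hmin _ (min_le_left _ _)) ((hβ ε hε).trans (hmin _ (min_le_right _ _)))
  refine ⟨cmk K ⟨_, hq⟩, ?_⟩
  rw [← map_pow, ← map_mul]
  congr 1
  ext ε
  refine (mul_div_cancel_of_imp' fun hd => ?_).symm
  rw [← norm_eq_zero, ← sqrtScale_eq_zero_iff ε.2, ← norm_sqrtScaleNet, norm_eq_zero]
  exact (pow_eq_zero_iff'.1 hd).1

theorem stmt9_general (I J : Ideal (CGen K))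
    (hz : IsZIdeal K J) (h : J ≤ I.radical) : J ≤ I := by
  intro b hb
  obtain ⟨β, rfl⟩ := Ideal.Quotient.mk_surjective b
  have hd : cmk K (sqrtScaleNet β) ∈ J :=
    hz _ _ hb fun M hM => cmk_sqrtScaleNet_mem_iff hM β
  obtain ⟨n, hn⟩ := h hd
  obtain ⟨c, hc⟩ := cmk_sqrtScaleNet_pow_dvd β n
  rw [hc]
  exact I.mul_mem_right c hn

/-- if `I`, `J` are proper ideals of `𝕂̃`, `J` a z-ideal contained
in the radical of `I`, then `J ⊆ I`. -/
theorem stmt9 (I J : Ideal (CGen K)) (hI : I ≠ ⊤) (hJ : J ≠ ⊤)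
    (hz : IsZIdeal K J) (h : J ≤ I.radical) : J ≤ I :=
  stmt9_general I J hz h

end
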